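/- (Proposition 4.) Fix integers T ≥ 1 and K > 1, strictly positive unnormalized target densities γ_1, …, γ_T with normalizing constants Z_1, …, Z_T ∈ (0, ∞) and normalized targets π_t = γ_t/Z_t, and strictly positive normalized proposal densities q_1, …, q_T. Define P_SMC(x_{1:T}^{1:K}, a_{1:T−1}^{1:K}) = Q_SMC(x_{1:T}^{1:K}, a_{1:T−1}^{1:K}) · Ẑ_SMC(x_{1:T}^{1:K}, a_{1:T−1}^{1:K}) / Z_T. Then P_SMC(x_{1:T}^{1:K}, a_{1:T−1}^{1:K}) = Q_SMC(x_{1:T}^{1:K}, a_{1:T−1}^{1:K}) for all particle configurations (x_{1:T}^{1:K}, a_{1:T−1}^{1:K}) if and only if both: (1) π_t(x_{1:t}) = ∫ π_T(x_{1:t}, x_{t+1:T}) dμ^{⊗(T−t)}(x_{t+1:T}) for all x_{1:t} and all t = 1, …, T, and (2) q_1(x_1) = π_1(x_1) for all x_1 and q_t(x_{1:t}) = π_t(x_{1:t})/π_{t−1}(x_{1:t−1}) for all x_{1:t} and t = 2, …, T. -/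

import Mathlib

open MeasureTheory Finset

noncomputable section

variable {X : Type*}

/-- Incremental weight functions: `w_1(x_1) = γ_1(x_1)/q_1(x_1)` and, for `t ≥ 2`,
`w_t(x_{1:t}) = γ_t(x_{1:t}) / (γ_{t-1}(x_{1:t-1}) q_t(x_{1:t}))`. -/
def incW (γ q : (t : ℕ) → (Fin t → X) → ℝ) : (t : ℕ) → (Fin t → X) → ℝ
  | 0, _ => 1
  | 1, v => γ 1 v / q 1 v
  | (t + 2), v => γ (t + 2) v / (γ (t + 1) (Fin.init v) * q (t + 2) v)

/-- Particle trajectories: `x̃_{1:1}^k = x_1^k` and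
`x̃_{1:t}^k = (x̃_{1:t-1}^{a_{t-1}^k}, x_t^k)`.  Here `x t k` denotes the particle
`x_{t+1}^k` and `a t k` denotes the ancestor index `a_{t+1}^k`. -/
def traj {K : ℕ} (x : ℕ → Fin K → X) (a : ℕ → Fin K → Fin K) :
    (t : ℕ) → Fin K → Fin t → X
  | 0, _ => Fin.elim0
  | 1, k => fun _ => x 0 k
  | (t + 2), k => Fin.snoc (traj x a (t + 1) (a t k)) (x (t + 1) k)

/-- SMC marginal likelihood estimator `Ẑ_SMC = ∏_{t=1}^T (1/K) ∑_k w_t^k`, where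
`w_t^k = w_t(x̃_{1:t}^k)`. -/
def smcZhat (γ q : (t : ℕ) → (Fin t → X) → ℝ) (T K : ℕ) (x : ℕ → Fin K → X)
    (a : ℕ → Fin K → Fin K) : ℝ :=
  ∏ t ∈ Finset.range T, ((K : ℝ)⁻¹ * ∑ k : Fin K, incW γ q (t + 1) (traj x a (t + 1) k))

/-- SMC sampling density
`Q_SMC = (∏_k q_1(x_1^k)) ∏_{t=2}^T ∏_k q_t(x̃_{1:t-1}^{a_{t-1}^k}, x_t^k) w̄_{t-1}^{a_{t-1}^k}`,
where `w̄_t^j = w_t^j / ∑_ℓ w_t^ℓ` are the normalized weights. -/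
def smcQ (γ q : (t : ℕ) → (Fin t → X) → ℝ) (T K : ℕ) (x : ℕ → Fin K → X)
    (a : ℕ → Fin K → Fin K) : ℝ :=
  (∏ k : Fin K, q 1 (traj x a 1 k)) *
    ∏ t ∈ Finset.range (T - 1), ∏ k : Fin K,
      q (t + 2) (traj x a (t + 2) k) *
        (incW γ q (t + 1) (traj x a (t + 1) (a t k)) /
          ∑ l : Fin K, incW γ q (t + 1) (traj x a (t + 1) l))

end

/-!
Since `Q_SMC > 0`, `P_SMC = Q_SMC` everywhere means `Ẑ_SMC ≡ Z_T`. If `Ẑ_SMC` is constant and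
`K ≥ 2`, every incremental weight `w_t` is constant: let one particle follow an arbitrary path
up to time `s` while all others follow a fixed path; then only one summand of the `s`-th factor
of `Ẑ_SMC` depends on that path (the earlier factors are constant by induction). Writing
`w_t ≡ d_t` gives `γ_t(x_{1:t}) = d_t γ_{t-1}(x_{1:t-1}) q_t(x_{1:t})`; integrating out `x_t`
against the normalized `q_t` yields `d_1 = Z_1` and `d_t = Z_t / Z_{t-1}`, i.e.
`π_t = π_{t-1} q_t`, which is (2). Integrating out the trailing coordinates one at a time then
gives (1). Conversely, (2) makes `w_t ≡ Z_t / Z_{t-1}`, and `Ẑ_SMC` telescopes to `Z_T`.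
-/

open scoped ENNReal

section

variable {X : Type*}

theorem Finset.eq_of_prod_eq_prod_of_forall_ne {ι M : Type*} [CommGroupWithZero M]
    {S : Finset ι} {f g : ι → M} {s : ι} (hs : s ∈ S) (hg : ∀ i ∈ S, g i ≠ 0)
    (hfg : ∀ i ∈ S, i ≠ s → f i = g i) (h : ∏ i ∈ S, f i = ∏ i ∈ S, g i) : f s = g s := by
  have hratio : ∏ i ∈ S, f i / g i = f s / g s :=
    prod_eq_single_of_mem s hs fun i hi his => by rw [hfg i hi his, div_self (hg i hi)]
  rwa [prod_div_distrib, h, div_self (prod_ne_zero_iff.2 hg), eq_comm,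
    div_eq_one_iff_eq (hg s hs)] at hratio

theorem Finset.eq_of_sum_eq_sum_of_forall_ne {ι M : Type*} [AddCommGroup M] {S : Finset ι}
    {f g : ι → M} {s : ι} (hs : s ∈ S) (hfg : ∀ i ∈ S, i ≠ s → f i = g i)
    (h : ∑ i ∈ S, f i = ∑ i ∈ S, g i) : f s = g s := by
  have hdiff : ∑ i ∈ S, (f i - g i) = f s - g s :=
    sum_eq_single_of_mem s hs fun i hi his => by rw [hfg i hi his, sub_self]
  rwa [sum_sub_distrib, h, sub_self, eq_comm, sub_eq_zero] at hdiff

theorem prod_range_ratio_eq {G : Type*} [CommGroupWithZero G] {Z : ℕ → G} {n : ℕ}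
    (hn : 1 ≤ n) (hZ : ∀ t, 1 ≤ t → t < n → Z t ≠ 0) :
    ∏ t ∈ range n, (if t = 0 then Z 1 else Z (t + 1) / Z t) = Z n := by
  induction n, hn using Nat.le_induction with
  | base => simp
  | succ n hn ih =>
    rw [prod_range_succ, ih fun t h1 h2 => hZ t h1 (by omega), if_neg (by omega),
      mul_div_cancel₀ _ (hZ n hn (by omega))]

section Integration

variable [MeasurableSpace X] {μ : Measure X} [SigmaFinite μ]

theorem measurable_fin_append {m n : ℕ} (u : Fin m → X) :
    Measurable (Fin.append u : (Fin n → X) → Fin (m + n) → X) :=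
  measurable_pi_iff.2 fun i => by
    refine Fin.addCases (fun i => ?_) (fun i => ?_) i <;> simp [measurable_pi_apply]

theorem integral_pi_fin_zero (f : (Fin 0 → X) → ℝ) :
    ∫ w, f w ∂Measure.pi (fun _ => μ) = f Fin.elim0 := by
  rw [integral_unique, measureReal_def, Measure.pi_univ]
  simp [Subsingleton.elim default Fin.elim0]

theorem lintegral_pi_fin_succ {n : ℕ} {f : (Fin (n + 1) → X) → ℝ≥0∞} (hf : Measurable f) :
    ∫⁻ v, f v ∂Measure.pi (fun _ => μ)
      = ∫⁻ p, ∫⁻ y, f (Fin.snoc p y) ∂μ ∂Measure.pi (fun _ => μ) := by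
  rw [← ((measurePreserving_piFinSuccAbove (fun _ => μ) (Fin.last n)).symm).lintegral_comp hf]
  refine (lintegral_prod_symm' _ (hf.comp (MeasurableEquiv.measurable _))).trans ?_
  simp [MeasurableEquiv.piFinSuccAbove_symm_apply, Fin.snocEquiv]

theorem integral_pi_fin_succ_of_snoc_eq_mul {n : ℕ} {f : (Fin (n + 1) → X) → ℝ}
    {g : (Fin n → X) → ℝ} {κ : (Fin n → X) → X → ℝ} (hf : Measurable f) (hf0 : 0 ≤ f)
    (hg : Measurable g) (hκ : ∀ p, ∫ y, κ p y ∂μ = 1)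
    (hfg : ∀ p y, f (Fin.snoc p y) = g p * κ p y) :
    ∫ v, f v ∂Measure.pi (fun _ => μ) = ∫ p, g p ∂Measure.pi (fun _ => μ) := by
  have hsec (p : Fin n → X) :
      Integrable (fun y => f (Fin.snoc p y)) μ ∧ ∫ y, f (Fin.snoc p y) ∂μ = g p := by
    simp only [hfg p]
    exact ⟨(Integrable.of_integral_ne_zero (by rw [hκ p]; exact one_ne_zero)).const_mul _,
      by rw [integral_const_mul, hκ p, mul_one]⟩
  have hg0 : 0 ≤ g := fun p => (hsec p).2 ▸ integral_nonneg fun y => hf0 _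
  -- passing to lower integrals (Tonelli) avoids having to prove that `f` is integrable
  rw [integral_eq_lintegral_of_nonneg_ae (.of_forall hf0) hf.aestronglyMeasurable,
    integral_eq_lintegral_of_nonneg_ae (.of_forall hg0) hg.aestronglyMeasurable,
    lintegral_pi_fin_succ hf.ennreal_ofReal]
  congr 1
  refine lintegral_congr fun p => ?_
  rw [← (hsec p).2, ofReal_integral_eq_lintegral_ofReal (hsec p).1 (.of_forall fun y => hf0 _)]

theorem integral_append_of_snoc_eq_mul {π q : (n : ℕ) → (Fin n → X) → ℝ} {t : ℕ} (s : ℕ)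
    (hπ : ∀ m, t ≤ m → m ≤ t + s → Measurable (π m))
    (hπ0 : ∀ m, t ≤ m → m ≤ t + s → 0 ≤ π m)
    (hq : ∀ m, t ≤ m → m < t + s → ∀ p, ∫ y, q (m + 1) (Fin.snoc p y) ∂μ = 1)
    (hfac : ∀ m, t ≤ m → m < t + s → ∀ p y,
      π (m + 1) (Fin.snoc p y) = π m p * q (m + 1) (Fin.snoc p y))
    (vp : Fin t → X) :
    ∫ w, π (t + s) (Fin.append vp w) ∂Measure.pi (fun _ => μ) = π t vp := by
  induction s with
  | zero =>
    rw [integral_pi_fin_zero, Fin.append_elim0]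
    rfl
  | succ s ih =>
    rw [← ih (fun m h1 h2 => hπ m h1 (by omega)) (fun m h1 h2 => hπ0 m h1 (by omega))
      (fun m h1 h2 => hq m h1 (by omega)) (fun m h1 h2 => hfac m h1 (by omega))]
    refine integral_pi_fin_succ_of_snoc_eq_mul
      ((hπ _ (by omega) le_rfl).comp (measurable_fin_append vp))
      (fun w => hπ0 _ (by omega) le_rfl _)
      ((hπ _ (by omega) (by omega)).comp (measurable_fin_append vp))
      (fun w => hq (t + s) (by omega) (by omega) (Fin.append vp w)) fun w y => ?_
    rw [Fin.append_snoc]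
    exact hfac (t + s) (by omega) (by omega) _ _

end Integration

theorem incW_pos {γ q : (t : ℕ) → (Fin t → X) → ℝ} {T : ℕ}
    (hγ : ∀ t, 1 ≤ t → t ≤ T → ∀ v, 0 < γ t v) (hq : ∀ t, 1 ≤ t → t ≤ T → ∀ v, 0 < q t v)
    {t : ℕ} (ht : t < T) (v : Fin (t + 1) → X) : 0 < incW γ q (t + 1) v := by
  rcases t with _ | t
  · exact div_pos (hγ 1 le_rfl (by omega) v) (hq 1 le_rfl (by omega) v)
  · exact div_pos (hγ _ (by omega) (by omega) v)
      (mul_pos (hγ _ (by omega) (by omega) _) (hq _ (by omega) (by omega) v))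

theorem smcQ_pos {γ q : (t : ℕ) → (Fin t → X) → ℝ} {T K : ℕ} [NeZero K]
    (hγ : ∀ t, 1 ≤ t → t ≤ T → ∀ v, 0 < γ t v) (hq : ∀ t, 1 ≤ t → t ≤ T → ∀ v, 0 < q t v)
    (hT : 1 ≤ T) (x : ℕ → Fin K → X) (a : ℕ → Fin K → Fin K) : 0 < smcQ γ q T K x a := by
  refine mul_pos (prod_pos fun k _ => hq 1 le_rfl hT _)
    (prod_pos fun t ht => prod_pos fun k _ => ?_)
  have ht : t + 1 < T := by have := mem_range.1 ht; omega
  exact mul_pos (hq _ (by omega) ht _) (div_pos (incW_pos hγ hq (by omega) _)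
    (sum_pos (fun l _ => incW_pos hγ hq (by omega) _) univ_nonempty))

theorem smcZhat_eq_prod_of_incW_eq {γ q : (t : ℕ) → (Fin t → X) → ℝ} {T K : ℕ} (hK : K ≠ 0)
    {c : ℕ → ℝ} (hc : ∀ t < T, ∀ v, incW γ q (t + 1) v = c t)
    (x : ℕ → Fin K → X) (a : ℕ → Fin K → Fin K) :
    smcZhat γ q T K x a = ∏ t ∈ range T, c t := by
  refine prod_congr rfl fun t ht => ?_
  simp only [hc t (mem_range.1 ht), sum_const, card_univ, Fintype.card_fin, nsmul_eq_mul]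
  field_simp

theorem smcZhat_eq_of_proposal_eq {γ q : (t : ℕ) → (Fin t → X) → ℝ} {T K : ℕ} {Z : ℕ → ℝ}
    (hT : 1 ≤ T) (hK : K ≠ 0) (hγ : ∀ t, 1 ≤ t → t ≤ T → ∀ v, 0 < γ t v)
    (hZ : ∀ t, 1 ≤ t → t ≤ T → 0 < Z t) (hq_one : ∀ v : Fin 1 → X, q 1 v = γ 1 v / Z 1)
    (hq_succ : ∀ t : ℕ, t + 2 ≤ T → ∀ v : Fin (t + 2) → X,
      q (t + 2) v = (γ (t + 2) v / Z (t + 2)) / (γ (t + 1) (Fin.init v) / Z (t + 1)))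
    (x : ℕ → Fin K → X) (a : ℕ → Fin K → Fin K) : smcZhat γ q T K x a = Z T := by
  rw [smcZhat_eq_prod_of_incW_eq hK (c := fun t => if t = 0 then Z 1 else Z (t + 1) / Z t)
    fun t ht v => ?_, prod_range_ratio_eq hT fun t h1 h2 => (hZ t h1 h2.le).ne']
  rcases t with _ | t
  · have := (hγ 1 le_rfl hT v).ne'
    have := (hZ 1 le_rfl hT).ne'
    simp only [incW, hq_one, if_true]
    field_simp
  · have := (hγ _ (by omega) ht v).ne'
    have := (hγ _ (by omega) ht.le (Fin.init v)).ne'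
    have := (hZ (t + 1) (by omega) ht.le).ne'
    have := (hZ (t + 2) (by omega) ht).ne'
    simp only [incW, hq_succ t ht, add_eq_zero, one_ne_zero, and_false, if_false]
    field_simp

theorem traj_follow {K : ℕ} {i j : Fin K} (hij : i ≠ j) (p v : ℕ → X) (s t : ℕ) (k : Fin K) :
    traj (fun r k => if k = j ∧ r ≤ s then v r else p r)
        (fun r k => if k = j ∧ r < s then j else i) (t + 1) k
      = if k = j ∧ t ≤ s then fun r : Fin (t + 1) => v r else fun r => p r := by
  induction t generalizing k with
  | zero =>
    funext r
    obtain rfl : r = 0 := Fin.fin_one_eq_zero r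
    by_cases hk : k = j <;> simp [traj, hk]
  | succ t ih =>
    have hsnoc (w : ℕ → X) :
        (Fin.snoc (fun r : Fin (t + 1) => w r) (w (t + 1)) : Fin (t + 2) → X)
          = fun r : Fin (t + 2) => w r :=
      Fin.snoc_init_self (fun r : Fin (t + 2) => w r)
    rw [traj]
    by_cases hk : k = j
    · subst hk
      by_cases hts : t + 1 ≤ s
      · simp only [ih, hts, true_and, show t < s by omega, show t ≤ s by omega, if_true]
        exact hsnoc v
      · simp only [ih, hts, true_and, show ¬ t < s by omega, hij, false_and, if_false]
        exact hsnoc p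
    · simp only [ih, hk, false_and, if_false, hij]
      exact hsnoc p

theorem incW_restrict_eq_of_smcZhat_const {γ q : (t : ℕ) → (Fin t → X) → ℝ} {T K : ℕ}
    (hK : 1 < K) (hγ : ∀ t, 1 ≤ t → t ≤ T → ∀ v, 0 < γ t v)
    (hq : ∀ t, 1 ≤ t → t ≤ T → ∀ v, 0 < q t v) {c : ℝ}
    (hZhat : ∀ x a, smcZhat γ q T K x a = c) (s : ℕ) (hs : s < T) (v v' : ℕ → X) :
    incW γ q (s + 1) (fun r => v r) = incW γ q (s + 1) (fun r => v' r) := by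
  induction s using Nat.strong_induction_on generalizing v v' with
  | _ s ih =>
    let i : Fin K := ⟨0, by omega⟩
    let j : Fin K := ⟨1, hK⟩
    have hij : i ≠ j := by simp [i, j, Fin.ext_iff]
    -- particle `j` follows `w` up to time `s`; everything else follows `v`
    let x (w : ℕ → X) : ℕ → Fin K → X := fun r k => if k = j ∧ r ≤ s then w r else v r
    let a : ℕ → Fin K → Fin K := fun r k => if k = j ∧ r < s then j else i
    let W (w : ℕ → X) (t : ℕ) (k : Fin K) : ℝ := incW γ q (t + 1) (traj (x w) a (t + 1) k)
    have hW (w : ℕ → X) (t : ℕ) (k : Fin K) : W w t k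
        = incW γ q (t + 1) (if k = j ∧ t ≤ s then fun r => w r else fun r => v r) :=
      congrArg (incW γ q (t + 1)) (traj_follow hij v w s t k)
    have hW_eq (t : ℕ) (k : Fin K) (htk : t ≠ s ∨ k ≠ j) : W v t k = W v' t k := by
      rw [hW, hW]
      by_cases hkt : k = j ∧ t ≤ s
      · simp only [hkt, and_self, if_true]
        exact ih t (by omega) (by omega) v v'
      · simp only [hkt, if_false]
    have hfactor := eq_of_prod_eq_prod_of_forall_ne (mem_range.2 hs)
      (fun t ht => (mul_pos (inv_pos.2 (by positivity : (0 : ℝ) < K))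
        (sum_pos (fun k _ => incW_pos hγ hq (mem_range.1 ht) _) ⟨j, mem_univ j⟩)).ne')
      (fun t _ hts => congrArg _ (sum_congr rfl fun k _ => hW_eq t k (.inl hts)))
      ((hZhat (x v) a).trans (hZhat (x v') a).symm)
    have hj := eq_of_sum_eq_sum_of_forall_ne (mem_univ j) (fun k _ hk => hW_eq s k (.inr hk))
      (mul_left_cancel₀ (by positivity) hfactor)
    simpa [hW] using hj

theorem exists_incW_eq_of_smcZhat_const {γ q : (t : ℕ) → (Fin t → X) → ℝ} {T K : ℕ}
    (hK : 1 < K) (hγ : ∀ t, 1 ≤ t → t ≤ T → ∀ v, 0 < γ t v)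
    (hq : ∀ t, 1 ≤ t → t ≤ T → ∀ v, 0 < q t v) {c : ℝ}
    (hZhat : ∀ x a, smcZhat γ q T K x a = c) :
    ∃ d : ℕ → ℝ, ∀ t < T, ∀ v : Fin (t + 1) → X, incW γ q (t + 1) v = d t := by
  rcases isEmpty_or_nonempty X with hX | ⟨⟨x₀⟩⟩
  · exact ⟨0, fun t _ v => isEmptyElim (v 0)⟩
  refine ⟨fun t => incW γ q (t + 1) fun _ => x₀, fun t ht v => ?_⟩
  have h := incW_restrict_eq_of_smcZhat_const hK hγ hq hZhat t ht
    (fun r => if h : r < t + 1 then v ⟨r, h⟩ else x₀) fun _ => x₀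
  simpa [Fin.is_le] using h

theorem target_snoc_eq_mul_of_incW_eq {γ q : (t : ℕ) → (Fin t → X) → ℝ} {T : ℕ} {d : ℕ → ℝ}
    (hγ : ∀ t, 1 ≤ t → t ≤ T → ∀ v, 0 < γ t v) (hq : ∀ t, 1 ≤ t → t ≤ T → ∀ v, 0 < q t v)
    (hd : ∀ t < T, ∀ v : Fin (t + 1) → X, incW γ q (t + 1) v = d t)
    {m : ℕ} (hm : 1 ≤ m) (hmT : m < T) (p : Fin m → X) (y : X) :
    γ (m + 1) (Fin.snoc p y) = d m * γ m p * q (m + 1) (Fin.snoc p y) := by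
  obtain ⟨n, rfl⟩ : ∃ n, m = n + 1 := ⟨m - 1, by omega⟩
  have h : γ (n + 2) (Fin.snoc p y) / (γ (n + 1) (Fin.init (Fin.snoc p y : Fin (n + 2) → X))
      * q (n + 2) (Fin.snoc p y)) = d (n + 1) := hd (n + 1) hmT (Fin.snoc p y)
  rw [Fin.init_snoc,
    div_eq_iff (mul_pos (hγ _ hm (by omega) p) (hq _ (by omega) hmT _)).ne'] at h
  rw [h, mul_assoc]

theorem proposal_eq_div_of_snoc_eq_mul {γ q : (t : ℕ) → (Fin t → X) → ℝ} {T : ℕ} {Z : ℕ → ℝ}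
    (hγ : ∀ t, 1 ≤ t → t ≤ T → ∀ v, 0 < γ t v) (hZ : ∀ t, 1 ≤ t → t ≤ T → 0 < Z t)
    (hfac : ∀ m, 1 ≤ m → m < T → ∀ p y,
      γ (m + 1) (Fin.snoc p y) / Z (m + 1) = γ m p / Z m * q (m + 1) (Fin.snoc p y))
    {t : ℕ} (ht : t + 2 ≤ T) (v : Fin (t + 2) → X) :
    q (t + 2) v = (γ (t + 2) v / Z (t + 2)) / (γ (t + 1) (Fin.init v) / Z (t + 1)) := by
  have h := hfac (t + 1) (by omega) (by omega) (Fin.init v) (v (Fin.last _))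
  rw [Fin.snoc_init_self] at h
  rw [h, mul_div_cancel_left₀ _
    (div_pos (hγ _ (by omega) (by omega) _) (hZ _ (by omega) (by omega))).ne']

section Forward

variable [MeasurableSpace X] {μ : Measure X} [SigmaFinite μ] {T : ℕ}
  {γ q : (t : ℕ) → (Fin t → X) → ℝ} {Z d : ℕ → ℝ}

theorem proposal_one_eq_of_incW_eq (hT : 1 ≤ T) (hγ_meas : Measurable (γ 1))
    (hγ : ∀ t, 1 ≤ t → t ≤ T → ∀ v, 0 < γ t v) (hq : ∀ t, 1 ≤ t → t ≤ T → ∀ v, 0 < q t v)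
    (hZ : ∫ v, γ 1 v ∂Measure.pi (fun _ => μ) = Z 1)
    (hq_norm : ∀ p : Fin 0 → X, ∫ y, q 1 (Fin.snoc p y) ∂μ = 1)
    (hd : ∀ t < T, ∀ v : Fin (t + 1) → X, incW γ q (t + 1) v = d t) (v : Fin 1 → X) :
    q 1 v = γ 1 v / Z 1 := by
  have hγq (w : Fin 1 → X) : γ 1 w = d 0 * q 1 w :=
    (div_eq_iff (hq 1 le_rfl hT w).ne').1 (hd 0 hT w)
  have hZ1 : Z 1 = d 0 := by
    rw [← hZ, integral_pi_fin_succ_of_snoc_eq_mul hγ_meas (fun w => (hγ 1 le_rfl hT w).le)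
      measurable_const hq_norm fun p y => hγq _, integral_pi_fin_zero]
  rw [hZ1, hγq, mul_div_cancel_left₀ _ (hd 0 hT v ▸ incW_pos hγ hq hT v).ne']

theorem normalizedTarget_snoc_eq_mul_of_incW_eq
    (hγ_meas : ∀ t, 1 ≤ t → t ≤ T → Measurable (γ t))
    (hγ : ∀ t, 1 ≤ t → t ≤ T → ∀ v, 0 < γ t v) (hq : ∀ t, 1 ≤ t → t ≤ T → ∀ v, 0 < q t v)
    (hZ_def : ∀ t, 1 ≤ t → t ≤ T → ∫ v, γ t v ∂Measure.pi (fun _ => μ) = Z t)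
    (hZ : ∀ t, 1 ≤ t → t ≤ T → 0 < Z t)
    (hq_norm : ∀ t < T, ∀ p : Fin t → X, ∫ y, q (t + 1) (Fin.snoc p y) ∂μ = 1)
    (hd : ∀ t < T, ∀ v : Fin (t + 1) → X, incW γ q (t + 1) v = d t)
    (m : ℕ) (hm : 1 ≤ m) (hmT : m < T) (p : Fin m → X) (y : X) :
    γ (m + 1) (Fin.snoc p y) / Z (m + 1) = γ m p / Z m * q (m + 1) (Fin.snoc p y) := by
  have hZ_succ : Z (m + 1) = d m * Z m := by
    rw [← hZ_def _ (by omega) hmT, ← hZ_def _ hm hmT.le, ← integral_const_mul]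
    exact integral_pi_fin_succ_of_snoc_eq_mul (hγ_meas _ (by omega) hmT)
      (fun v => (hγ _ (by omega) hmT v).le) ((hγ_meas m hm hmT.le).const_mul _)
      (hq_norm m hmT) (target_snoc_eq_mul_of_incW_eq hγ hq hd hm hmT)
  have hdm : d m ≠ 0 := (hd m hmT (Fin.snoc p y) ▸ incW_pos hγ hq hmT _).ne'
  have hZm : Z m ≠ 0 := (hZ m hm hmT.le).ne'
  rw [target_snoc_eq_mul_of_incW_eq hγ hq hd hm hmT, hZ_succ]
  field_simp

end Forward

end

theorem p_smc_eq_q_smc_iff_general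
    {X : Type*} [MeasurableSpace X] (μ : Measure X) [SigmaFinite μ]
    (T K : ℕ) (hT : 1 ≤ T) (hK : 1 < K)
    (γ q : (t : ℕ) → (Fin t → X) → ℝ) (Z : ℕ → ℝ)
    (hγ_meas : ∀ t, 1 ≤ t → t ≤ T → Measurable (γ t))
    (hγ_pos : ∀ t, 1 ≤ t → t ≤ T → ∀ v, 0 < γ t v)
    (hZ_def : ∀ t, 1 ≤ t → t ≤ T →
      ∫ v, γ t v ∂(Measure.pi fun _ : Fin t => μ) = Z t)
    (hZ_pos : ∀ t, 1 ≤ t → t ≤ T → 0 < Z t)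
    (hq_pos : ∀ t, 1 ≤ t → t ≤ T → ∀ v, 0 < q t v)
    (hq_norm : ∀ t < T, ∀ vp : Fin t → X, ∫ y, q (t + 1) (Fin.snoc vp y) ∂μ = 1) :
    (∀ (x : ℕ → Fin K → X) (a : ℕ → Fin K → Fin K),
        smcQ γ q T K x a * smcZhat γ q T K x a / Z T = smcQ γ q T K x a)
      ↔ ((∀ t s : ℕ, 1 ≤ t → t + s = T → ∀ vp : Fin t → X,
            γ t vp / Z t
              = ∫ w : Fin s → X, γ (t + s) (Fin.append vp w) / Z (t + s)
                  ∂(Measure.pi fun _ : Fin s => μ)) ∧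
          (∀ v : Fin 1 → X, q 1 v = γ 1 v / Z 1) ∧
          (∀ t : ℕ, t + 2 ≤ T → ∀ v : Fin (t + 2) → X,
            q (t + 2) v
              = (γ (t + 2) v / Z (t + 2)) / (γ (t + 1) (Fin.init v) / Z (t + 1)))) := by
  have : NeZero K := ⟨by omega⟩
  have hP_eq_Q (x : ℕ → Fin K → X) (a : ℕ → Fin K → Fin K) :
      smcQ γ q T K x a * smcZhat γ q T K x a / Z T = smcQ γ q T K x a
        ↔ smcZhat γ q T K x a = Z T := by
    rw [mul_div_assoc, mul_eq_left₀ (smcQ_pos hγ_pos hq_pos hT x a).ne',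
      div_eq_one_iff_eq (hZ_pos T hT le_rfl).ne']
  simp only [hP_eq_Q]
  refine ⟨fun hZhat => ?_, fun ⟨_, hq_one, hq_succ⟩ =>
    smcZhat_eq_of_proposal_eq hT (by omega) hγ_pos hZ_pos hq_one hq_succ⟩
  obtain ⟨d, hd⟩ := exists_incW_eq_of_smcZhat_const hK hγ_pos hq_pos hZhat
  have hfac := normalizedTarget_snoc_eq_mul_of_incW_eq hγ_meas hγ_pos hq_pos hZ_def hZ_pos
    hq_norm hd
  refine ⟨fun t s ht hts vp => ?_, proposal_one_eq_of_incW_eq hT (hγ_meas 1 le_rfl hT)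
    hγ_pos hq_pos (hZ_def 1 le_rfl hT) (hq_norm 0 hT) hd,
    fun t ht => proposal_eq_div_of_snoc_eq_mul hγ_pos hZ_pos hfac ht⟩
  subst hts
  exact (integral_append_of_snoc_eq_mul s
    (fun m h1 h2 => (hγ_meas m (by omega) h2).div_const _)
    (fun m h1 h2 v => div_nonneg (hγ_pos m (by omega) h2 v).le (hZ_pos m (by omega) h2).le)
    (fun m _ h2 => hq_norm m h2) (fun m h1 h2 => hfac m (by omega) h2) vp).symm

/-- **Proposition 4.**
Fix `T ≥ 1` and `K > 1`, strictly positive unnormalized targets `γ_1, …, γ_T` with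
normalizing constants `Z_1, …, Z_T ∈ (0, ∞)` (normalized targets `π_t = γ_t/Z_t`), and
strictly positive normalized proposals `q_1, …, q_T`.  With
`P_SMC = Q_SMC · Ẑ_SMC / Z_T`, we have `P_SMC = Q_SMC` for all particle configurations if
and only if (1) for every `t = 1, …, T` the normalized target `π_t` is the marginal of the
final target `π_T`, and (2) `q_1 = π_1` and
`q_t(x_{1:t}) = π_t(x_{1:t})/π_{t-1}(x_{1:t-1})` for `t = 2, …, T`. -/
theorem p_smc_eq_q_smc_iff
    {X : Type*} [MeasurableSpace X] (μ : Measure X) [SigmaFinite μ]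
    (T K : ℕ) (hT : 1 ≤ T) (hK : 1 < K)
    (γ q : (t : ℕ) → (Fin t → X) → ℝ) (Z : ℕ → ℝ)
    (hγ_meas : ∀ t, 1 ≤ t → t ≤ T → Measurable (γ t))
    (hγ_pos : ∀ t, 1 ≤ t → t ≤ T → ∀ v, 0 < γ t v)
    (hγ_int : ∀ t, 1 ≤ t → t ≤ T → Integrable (γ t) (Measure.pi fun _ : Fin t => μ))
    (hZ_def : ∀ t, 1 ≤ t → t ≤ T →
      ∫ v, γ t v ∂(Measure.pi fun _ : Fin t => μ) = Z t)
    (hZ_pos : ∀ t, 1 ≤ t → t ≤ T → 0 < Z t)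
    (hq_meas : ∀ t, 1 ≤ t → t ≤ T → Measurable (q t))
    (hq_pos : ∀ t, 1 ≤ t → t ≤ T → ∀ v, 0 < q t v)
    (hq_norm : ∀ t < T, ∀ vp : Fin t → X, ∫ y, q (t + 1) (Fin.snoc vp y) ∂μ = 1) :
    (∀ (x : ℕ → Fin K → X) (a : ℕ → Fin K → Fin K),
        smcQ γ q T K x a * smcZhat γ q T K x a / Z T = smcQ γ q T K x a)
      ↔ ((∀ t s : ℕ, 1 ≤ t → t + s = T → ∀ vp : Fin t → X,
            γ t vp / Z t
              = ∫ w : Fin s → X, γ (t + s) (Fin.append vp w) / Z (t + s)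
                  ∂(Measure.pi fun _ : Fin s => μ)) ∧
          (∀ v : Fin 1 → X, q 1 v = γ 1 v / Z 1) ∧
          (∀ t : ℕ, t + 2 ≤ T → ∀ v : Fin (t + 2) → X,
            q (t + 2) v
              = (γ (t + 2) v / Z (t + 2)) / (γ (t + 1) (Fin.init v) / Z (t + 1)))) :=
  p_smc_eq_q_smc_iff_general μ T K hT hK γ q Z hγ_meas hγ_pos hZ_def hZ_pos hq_pos hq_norm
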